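/- Fix the shared-seed coordinated sampling setup. A function f : V → ℝ_{≥0} has a nonnegative unbiased estimator if and only if for every v ∈ V, lim_{u→0⁺} f̲^{(v)}(u) = f(v). -/

import Mathlib

open MeasureTheory Set Filter Topology

noncomputable section

/-- A shared-seed coordinated sampling scheme on a data domain `V ⊆ ℝ_{≥0}^r`:
continuous non-decreasing seed-to-threshold maps `τ i : [0,1] → ℝ` whose range
infimum is at most the infimum of the `i`-th coordinate over the domain. -/
structure CoordScheme (r : ℕ) where
  V : Set (Fin r → ℝ)
  τ : Fin r → ℝ → ℝ
  V_nonneg : ∀ v ∈ V, ∀ i, 0 ≤ v i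
  τ_cont : ∀ i, ContinuousOn (τ i) (Set.Icc 0 1)
  τ_mono : ∀ i, MonotoneOn (τ i) (Set.Icc 0 1)
  τ_inf : ∀ i, sInf (τ i '' Set.Icc 0 1) ≤ sInf ((fun v => v i) '' V)

namespace CoordScheme

variable {r : ℕ}

/-- The set `S(u,v)` of sampled entries: `i` is sampled iff `v i ≥ τ i u`. -/
def sampled (C : CoordScheme r) (u : ℝ) (v : Fin r → ℝ) : Set (Fin r) :=
  {i | C.τ i u ≤ v i}

/-- The consistent set `V*(u,v)` of data vectors consistent with the outcome `S(u,v)`. -/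
def Vstar (C : CoordScheme r) (u : ℝ) (v : Fin r → ℝ) : Set (Fin r → ℝ) :=
  {z ∈ C.V | ∀ i, (C.τ i u ≤ v i → z i = v i) ∧ (v i < C.τ i u → z i < C.τ i u)}

/-- The lower bound function `f̲(u,v) = inf { f z : z ∈ V*(u,v) }`. -/
def lb (C : CoordScheme r) (f : (Fin r → ℝ) → ℝ) (u : ℝ) (v : Fin r → ℝ) : ℝ :=
  sInf (f '' C.Vstar u v)

/-- An estimator: an integrable function of the outcome (it takes equal values on
data vectors consistent with the same outcome). -/
structure IsEstimator (C : CoordScheme r) (fhat : ℝ → (Fin r → ℝ) → ℝ) : Prop where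
  integrable : ∀ v ∈ C.V, IntegrableOn (fun u => fhat u v) (Set.Ioc (0:ℝ) 1)
  consistent : ∀ u ∈ Set.Ioc (0:ℝ) 1, ∀ v ∈ C.V, ∀ z ∈ C.Vstar u v, fhat u v = fhat u z

/-- A nonnegative estimator. -/
def Nonneg (C : CoordScheme r) (fhat : ℝ → (Fin r → ℝ) → ℝ) : Prop :=
  ∀ u ∈ Set.Ioc (0:ℝ) 1, ∀ v ∈ C.V, 0 ≤ fhat u v

/-- An unbiased estimator of `f`. -/
def Unbiased (C : CoordScheme r) (f : (Fin r → ℝ) → ℝ)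
    (fhat : ℝ → (Fin r → ℝ) → ℝ) : Prop :=
  ∀ v ∈ C.V, (∫ u in Set.Ioc (0:ℝ) 1, fhat u v) = f v

end CoordScheme

/-- Lower convex hull of `g` on `(0,1]`: the pointwise largest convex function
bounded above by `g` there. -/
def lowerHull (g : ℝ → ℝ) (u : ℝ) : ℝ :=
  sSup {y : ℝ | ∃ h : ℝ → ℝ, ConvexOn ℝ (Set.Ioc (0:ℝ) 1) h ∧
      (∀ x ∈ Set.Ioc (0:ℝ) 1, h x ≤ g x) ∧ y = h u}

namespace CoordScheme

variable {r : ℕ}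

/-- The `v`-optimal estimates: the negated derivative of the lower hull of the
lower-bound function `u ↦ f̲(u,v)`. -/
def optEst (C : CoordScheme r) (f : (Fin r → ℝ) → ℝ) (v : Fin r → ℝ) (u : ℝ) : ℝ :=
  -deriv (lowerHull (fun x => C.lb f x v)) u

/-- Cumulative integral `∫_{2^{-j}}^1` of the J estimator (by its defining recursion):
`Jint (j+1) = Jint j + (value on `(2^{-j-1},2^{-j}]`) ⬝ 2^{-j-1}`. -/
def Jint (C : CoordScheme r) (f : (Fin r → ℝ) → ℝ) (v : Fin r → ℝ) : ℕ → ℝ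
  | 0 => 0
  | (j+1) => Jint C f v j +
      ((2:ℝ) ^ (j+1) * (C.lb f ((2:ℝ) ^ (-(j:ℤ))) v - Jint C f v j)) * (2:ℝ) ^ (-(j:ℤ) - 1)

/-- The (constant) value of the J estimator on the dyadic interval `(2^{-j-1}, 2^{-j}]`.
For `j = 0` this is `2 ⬝ f̲(1,v)`; for `j ≥ 1` it is
`2^{j+1} ⬝ ( f̲(2^{-j},v) − ∫_{2^{-j}}^1 f̂⁽ᴶ⁾(x,v) dx )`. -/
def Jval (C : CoordScheme r) (f : (Fin r → ℝ) → ℝ) (v : Fin r → ℝ) (j : ℕ) : ℝ :=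
  (2:ℝ) ^ (j+1) * (C.lb f ((2:ℝ) ^ (-(j:ℤ))) v - Jint C f v j)

/-- The J estimator `f̂⁽ᴶ⁾(u,v)`: on `u ∈ (2^{-j-1}, 2^{-j}]` it takes the value `Jval j`. -/
def Jest (C : CoordScheme r) (f : (Fin r → ℝ) → ℝ) (u : ℝ) (v : Fin r → ℝ) : ℝ :=
  C.Jval f v ⌊-Real.logb 2 u⌋₊

end CoordScheme

/-!
If `f̂` is a nonnegative unbiased estimator and `z` is consistent with the outcome at seed `u`,
then `z` is consistent with the outcomes at all seeds `x ≥ u`, so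
`∫_u^1 f̂(x,v) dx = ∫_u^1 f̂(x,z) dx ≤ f z`. Hence `∫_u^1 f̂(x,v) dx ≤ f̲(u,v) ≤ f v`, and the
left side tends to `f v` as `u → 0⁺`.

Conversely, the J estimator is constant on each dyadic interval `(2^{-j-1}, 2^{-j}]`, with
integral `f̲(2^{-j},v) - f̲(2^{-j+1},v)` there (`f̲(1,v)` for `j = 0`). These increments are
nonnegative because `f̲(·,v)` is antitone, and they telescope to `lim_n f̲(2^{-n},v) = f v`.
-/

theorem tendsto_setIntegral_Ioc_nhdsGT {g : ℝ → ℝ} {a b : ℝ} (hab : a < b)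
    (hg : IntegrableOn g (Ioc a b)) :
    Tendsto (fun u => ∫ x in Ioc u b, g x) (𝓝[>] a) (𝓝 (∫ x in Ioc a b, g x)) := by
  have hcont : ContinuousWithinAt (fun u => ∫ x in u..b, g x) (Icc a b) a := by
    have hg' : IntegrableOn g (uIcc a b) := by
      rwa [uIcc_of_le hab.le, integrableOn_Icc_iff_integrableOn_Ioc]
    have h := intervalIntegral.continuousOn_primitive_interval_left hg'
    rw [uIcc_of_le hab.le] at h
    exact h a (left_mem_Icc.2 hab.le)
  have h := (hcont.mono Ioo_subset_Icc_self).tendsto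
  rw [nhdsWithin_Ioo_eq_nhdsGT hab, intervalIntegral.integral_of_le hab.le] at h
  refine h.congr' ?_
  filter_upwards [Ioo_mem_nhdsGT hab] with u hu
  exact intervalIntegral.integral_of_le hu.2.le

theorem tendsto_two_zpow_neg_nhdsGT :
    Tendsto (fun n : ℕ => (2:ℝ) ^ (-(n:ℤ))) atTop (𝓝[>] 0) := by
  refine tendsto_nhdsWithin_of_tendsto_nhds_of_eventually_within _ ?_
    (Eventually.of_forall fun n => mem_Ioi.2 (zpow_pos two_pos _))
  simp only [zpow_neg, zpow_natCast, ← inv_pow]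
  exact tendsto_pow_atTop_nhds_zero_of_lt_one (by norm_num) (by norm_num)

theorem two_zpow_neg_mem_Icc (j : ℕ) : (2:ℝ) ^ (-(j:ℤ)) ∈ Icc 0 1 :=
  ⟨(zpow_pos two_pos _).le, zpow_le_one_of_nonpos₀ one_le_two (by omega)⟩

def dyadicIoc (j : ℕ) : Set ℝ := Ioc ((2:ℝ) ^ (-(j:ℤ) - 1)) (2 ^ (-(j:ℤ)))

theorem dyadicIoc_subset_Ioc (j : ℕ) : dyadicIoc j ⊆ Ioc 0 1 :=
  Ioc_subset_Ioc (zpow_pos two_pos _).le (zpow_le_one_of_nonpos₀ one_le_two (by omega))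

theorem floor_neg_logb_eq_iff {u : ℝ} (hu : u ∈ Ioc 0 1) (j : ℕ) :
    ⌊-Real.logb 2 u⌋₊ = j ↔ u ∈ dyadicIoc j := by
  have hlog : 0 ≤ -Real.logb 2 u := neg_nonneg.2 (Real.logb_nonpos one_lt_two hu.1.le hu.2)
  rw [Nat.floor_eq_iff hlog, dyadicIoc, mem_Ioc, ← Real.rpow_intCast, ← Real.rpow_intCast,
    ← Real.lt_logb_iff_rpow_lt one_lt_two hu.1, ← Real.logb_le_iff_le_rpow one_lt_two hu.1]
  push_cast
  constructor <;> rintro ⟨h₁, h₂⟩ <;> constructor <;> linarith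

theorem iUnion_dyadicIoc : ⋃ j, dyadicIoc j = Ioc 0 1 :=
  Subset.antisymm (iUnion_subset dyadicIoc_subset_Ioc) fun _ hu =>
    mem_iUnion.2 ⟨_, (floor_neg_logb_eq_iff hu _).1 rfl⟩

theorem pairwise_disjoint_dyadicIoc : Pairwise (Function.onFun Disjoint dyadicIoc) := by
  intro i j hij
  rw [Function.onFun, disjoint_iff_forall_ne]
  rintro u hi _ hj rfl
  exact hij (((floor_neg_logb_eq_iff (dyadicIoc_subset_Ioc i hi) i).2 hi).symm.trans
    ((floor_neg_logb_eq_iff (dyadicIoc_subset_Ioc j hj) j).2 hj))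

theorem volume_real_dyadicIoc (j : ℕ) : volume.real (dyadicIoc j) = 2 ^ (-(j:ℤ) - 1) := by
  have h : (2:ℝ) ^ (-(j:ℤ)) = 2 * 2 ^ (-(j:ℤ) - 1) := by
    rw [← zpow_one_add₀ two_ne_zero]; ring_nf
  rw [dyadicIoc, Real.volume_real_Ioc, h]
  ring_nf
  exact max_eq_left (by positivity)

theorem measurableSet_dyadicIoc (j : ℕ) : MeasurableSet (dyadicIoc j) := measurableSet_Ioc

theorem eqOn_dyadic_step (c : ℕ → ℝ) (j : ℕ) :
    EqOn (fun u => c ⌊-Real.logb 2 u⌋₊) (fun _ => c j) (dyadicIoc j) := fun u hu => by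
  simp only [(floor_neg_logb_eq_iff (dyadicIoc_subset_Ioc j hu) j).2 hu]

theorem setIntegral_dyadicIoc_step (c : ℕ → ℝ) (j : ℕ) :
    ∫ u in dyadicIoc j, c ⌊-Real.logb 2 u⌋₊ = c j * 2 ^ (-(j:ℤ) - 1) := by
  rw [setIntegral_congr_fun (measurableSet_dyadicIoc j) (eqOn_dyadic_step c j),
    setIntegral_const, volume_real_dyadicIoc, smul_eq_mul, mul_comm]

theorem integrableOn_dyadic_step {c : ℕ → ℝ}
    (hc : Summable fun j => ‖c j‖ * 2 ^ (-(j:ℤ) - 1)) :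
    IntegrableOn (fun u => c ⌊-Real.logb 2 u⌋₊) (Ioc 0 1) := by
  rw [← iUnion_dyadicIoc]
  refine integrableOn_iUnion_of_summable_integral_norm (fun j => ?_) ?_
  · exact (integrableOn_const measure_Ioc_lt_top.ne).congr_fun (eqOn_dyadic_step c j).symm
      (measurableSet_dyadicIoc j)
  · simpa only [setIntegral_dyadicIoc_step fun j => ‖c j‖] using hc

theorem integral_dyadic_step {c : ℕ → ℝ}
    (hc : Summable fun j => ‖c j‖ * 2 ^ (-(j:ℤ) - 1)) :
    ∫ u in Ioc 0 1, c ⌊-Real.logb 2 u⌋₊ = ∑' j, c j * 2 ^ (-(j:ℤ) - 1) := by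
  have h := integrableOn_dyadic_step hc
  rw [← iUnion_dyadicIoc] at h ⊢
  rw [integral_iUnion measurableSet_dyadicIoc pairwise_disjoint_dyadicIoc h]
  simp only [setIntegral_dyadicIoc_step]

namespace CoordScheme

variable {r : ℕ} (C : CoordScheme r)

theorem mem_Vstar_self {v : Fin r → ℝ} (hv : v ∈ C.V) (u : ℝ) : v ∈ C.Vstar u v :=
  ⟨hv, fun _ => ⟨fun _ => rfl, id⟩⟩

theorem Vstar_subset_Vstar {u x : ℝ} (hu : u ∈ Icc 0 1) (hx : x ∈ Icc 0 1) (hux : u ≤ x)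
    (v : Fin r → ℝ) : C.Vstar u v ⊆ C.Vstar x v := by
  rintro z ⟨hzV, hz⟩
  have hτ : ∀ i, C.τ i u ≤ C.τ i x := fun i => C.τ_mono i hu hx hux
  refine ⟨hzV, fun i => ⟨fun h => (hz i).1 ((hτ i).trans h), fun h => ?_⟩⟩
  rcases le_or_gt (C.τ i u) (v i) with hs | hs
  · exact (hz i).1 hs ▸ h
  · exact ((hz i).2 hs).trans_le (hτ i)

theorem Vstar_eq_of_mem {x : ℝ} {v z : Fin r → ℝ} (hz : z ∈ C.Vstar x v) :
    C.Vstar x z = C.Vstar x v := by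
  ext w
  refine and_congr_right fun _ => forall_congr' fun i => ?_
  rcases le_or_gt (C.τ i x) (v i) with hs | hs
  · rw [(hz.2 i).1 hs]
  · have hzs := (hz.2 i).2 hs
    simp only [not_le.2 hs, not_le.2 hzs, false_imp_iff, true_and, hs, hzs, true_imp_iff]

variable {C} (f : (Fin r → ℝ) → ℝ)

theorem lb_eq_of_mem_Vstar {u x : ℝ} (hu : u ∈ Icc 0 1) (hx : x ∈ Icc 0 1) (hux : u ≤ x)
    {v z : Fin r → ℝ} (hz : z ∈ C.Vstar u v) : C.lb f x z = C.lb f x v := by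
  rw [lb, lb, C.Vstar_eq_of_mem (C.Vstar_subset_Vstar hu hx hux v hz)]

section Nonneg

variable {f} (hf : ∀ v ∈ C.V, 0 ≤ f v)
include hf

theorem bddBelow_image_Vstar (u : ℝ) (v : Fin r → ℝ) : BddBelow (f '' C.Vstar u v) :=
  ⟨0, by rintro _ ⟨z, hz, rfl⟩; exact hf z hz.1⟩

theorem lb_nonneg {v : Fin r → ℝ} (hv : v ∈ C.V) (u : ℝ) : 0 ≤ C.lb f u v :=
  le_csInf ⟨f v, v, C.mem_Vstar_self hv u, rfl⟩ (by rintro _ ⟨z, hz, rfl⟩; exact hf z hz.1)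

theorem lb_le_self {v : Fin r → ℝ} (hv : v ∈ C.V) (u : ℝ) : C.lb f u v ≤ f v :=
  csInf_le (bddBelow_image_Vstar hf u v) ⟨v, C.mem_Vstar_self hv u, rfl⟩

theorem antitoneOn_lb {v : Fin r → ℝ} (hv : v ∈ C.V) :
    AntitoneOn (fun u => C.lb f u v) (Icc 0 1) := fun u hu x hx hux =>
  csInf_le_csInf (bddBelow_image_Vstar hf x v) ⟨f v, v, C.mem_Vstar_self hv u, rfl⟩
    (image_mono (C.Vstar_subset_Vstar hu hx hux v))

end Nonneg

theorem setIntegral_Ioc_le_lb {fhat : ℝ → (Fin r → ℝ) → ℝ} (hest : C.IsEstimator fhat)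
    (hnn : C.Nonneg fhat) (hub : C.Unbiased f fhat) {u : ℝ} (hu : u ∈ Ioc 0 1)
    {v : Fin r → ℝ} (hv : v ∈ C.V) : ∫ x in Ioc u 1, fhat x v ≤ C.lb f u v := by
  refine le_csInf ⟨f v, v, C.mem_Vstar_self hv u, rfl⟩ ?_
  rintro _ ⟨z, hz, rfl⟩
  have hx : ∀ x ∈ Ioc u 1, x ∈ Ioc (0:ℝ) 1 := fun x hx => ⟨hu.1.trans hx.1, hx.2⟩
  calc ∫ x in Ioc u 1, fhat x v
      = ∫ x in Ioc u 1, fhat x z := setIntegral_congr_fun measurableSet_Ioc fun x hxu =>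
        hest.consistent x (hx x hxu) v hv z (C.Vstar_subset_Vstar (Ioc_subset_Icc_self hu)
          (Ioc_subset_Icc_self (hx x hxu)) hxu.1.le v hz)
    _ ≤ ∫ x in Ioc 0 1, fhat x z :=
        setIntegral_mono_set (hest.integrable z hz.1)
          ((ae_restrict_iff' measurableSet_Ioc).2 (Eventually.of_forall fun x hx => hnn x hx z hz.1))
          (Ioc_subset_Ioc_left hu.1.le).eventuallyLE
    _ = f z := hub z hz.1

theorem tendsto_lb_of_unbiased (hf : ∀ v ∈ C.V, 0 ≤ f v) {fhat : ℝ → (Fin r → ℝ) → ℝ}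
    (hest : C.IsEstimator fhat) (hnn : C.Nonneg fhat) (hub : C.Unbiased f fhat)
    {v : Fin r → ℝ} (hv : v ∈ C.V) :
    Tendsto (fun u => C.lb f u v) (𝓝[>] 0) (𝓝 (f v)) := by
  have hlow := tendsto_setIntegral_Ioc_nhdsGT one_pos (hest.integrable v hv)
  rw [hub v hv] at hlow
  refine tendsto_of_tendsto_of_tendsto_of_le_of_le' hlow tendsto_const_nhds ?_
    (Eventually.of_forall (lb_le_self hf hv))
  filter_upwards [Ioc_mem_nhdsGT one_pos] with u hu
  exact setIntegral_Ioc_le_lb f hest hnn hub hu hv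

theorem Jint_succ (v : Fin r → ℝ) (j : ℕ) : C.Jint f v (j + 1) = C.lb f (2 ^ (-(j:ℤ))) v := by
  have h : (2:ℝ) ^ (j + 1) * 2 ^ (-(j:ℤ) - 1) = 1 := by
    rw [← zpow_natCast, ← zpow_add₀ two_ne_zero]; simp
  rw [Jint]
  linear_combination (C.lb f (2 ^ (-(j:ℤ))) v - C.Jint f v j) * h

theorem Jval_eq (v : Fin r → ℝ) (j : ℕ) :
    C.Jval f v j = 2 ^ (j + 1) * (C.Jint f v (j + 1) - C.Jint f v j) := by
  rw [Jval, Jint_succ]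

theorem Jval_mul_eq (v : Fin r → ℝ) (j : ℕ) :
    C.Jval f v j * 2 ^ (-(j:ℤ) - 1) = C.Jint f v (j + 1) - C.Jint f v j := by
  rw [Jval, Jint]; ring

theorem Jint_eq_of_mem_Vstar {u : ℝ} (hu : u ∈ Ioc 0 1) {v z : Fin r → ℝ}
    (hz : z ∈ C.Vstar u v) {j : ℕ} (hj : u ≤ 2 ^ (-(j:ℤ))) :
    ∀ i ≤ j + 1, C.Jint f z i = C.Jint f v i
  | 0, _ => rfl
  | k + 1, hk => by
    have hk' : u ≤ 2 ^ (-(k:ℤ)) := hj.trans (zpow_le_zpow_right₀ one_le_two (by omega))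
    rw [Jint_succ, Jint_succ]
    exact lb_eq_of_mem_Vstar f (Ioc_subset_Icc_self hu) (two_zpow_neg_mem_Icc k) hk' hz

theorem Jval_eq_of_mem_Vstar {u : ℝ} (hu : u ∈ Ioc 0 1) {v z : Fin r → ℝ}
    (hz : z ∈ C.Vstar u v) {j : ℕ} (hj : u ≤ 2 ^ (-(j:ℤ))) : C.Jval f z j = C.Jval f v j := by
  rw [Jval_eq, Jval_eq, Jint_eq_of_mem_Vstar f hu hz hj _ le_rfl,
    Jint_eq_of_mem_Vstar f hu hz hj _ j.le_succ]

section Nonneg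

variable {f} (hf : ∀ v ∈ C.V, 0 ≤ f v)
include hf

theorem monotone_Jint {v : Fin r → ℝ} (hv : v ∈ C.V) : Monotone (C.Jint f v) := by
  refine monotone_nat_of_le_succ fun j => ?_
  cases j with
  | zero => exact (Jint_succ f v 0).symm ▸ lb_nonneg hf hv _
  | succ k =>
    rw [Jint_succ, Jint_succ]
    exact antitoneOn_lb hf hv (two_zpow_neg_mem_Icc _) (two_zpow_neg_mem_Icc _)
      (zpow_le_zpow_right₀ one_le_two (by omega))

theorem Jval_nonneg {v : Fin r → ℝ} (hv : v ∈ C.V) (j : ℕ) : 0 ≤ C.Jval f v j := by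
  rw [Jval_eq]
  exact mul_nonneg (by positivity) (sub_nonneg.2 (monotone_Jint hf hv j.le_succ))

theorem hasSum_Jval {v : Fin r → ℝ} (hv : v ∈ C.V)
    (hlim : Tendsto (fun u => C.lb f u v) (𝓝[>] 0) (𝓝 (f v))) :
    HasSum (fun j => C.Jval f v j * 2 ^ (-(j:ℤ) - 1)) (f v) := by
  have hJint : Tendsto (C.Jint f v) atTop (𝓝 (f v)) := by
    rw [← tendsto_add_atTop_iff_nat 1]
    simp only [Jint_succ]
    exact hlim.comp tendsto_two_zpow_neg_nhdsGT
  refine (hasSum_iff_tendsto_nat_of_nonneg (fun j => ?_) _).2 ?_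
  · exact mul_nonneg (Jval_nonneg hf hv j) (zpow_pos two_pos _).le
  · simp only [Jval_mul_eq, Finset.sum_range_sub]
    simpa only [Jint, sub_zero] using hJint

theorem summable_norm_Jval {v : Fin r → ℝ} (hv : v ∈ C.V)
    (hlim : Tendsto (fun u => C.lb f u v) (𝓝[>] 0) (𝓝 (f v))) :
    Summable fun j => ‖C.Jval f v j‖ * 2 ^ (-(j:ℤ) - 1) := by
  simpa only [Real.norm_of_nonneg (Jval_nonneg hf hv _)] using (hasSum_Jval hf hv hlim).summable

end Nonneg

theorem Jest_eq_of_mem_Vstar {u : ℝ} (hu : u ∈ Ioc 0 1) {v z : Fin r → ℝ}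
    (hz : z ∈ C.Vstar u v) : C.Jest f u v = C.Jest f u z :=
  (Jval_eq_of_mem_Vstar f hu hz ((floor_neg_logb_eq_iff hu _).1 rfl).2).symm

section Nonneg

variable {f} (hf : ∀ v ∈ C.V, 0 ≤ f v)
include hf

theorem nonneg_Jest : C.Nonneg (C.Jest f) := fun _ _ _ hv => Jval_nonneg hf hv _

variable (hlim : ∀ v ∈ C.V, Tendsto (fun u => C.lb f u v) (𝓝[>] 0) (𝓝 (f v)))
include hlim

theorem isEstimator_Jest : C.IsEstimator (C.Jest f) where
  integrable v hv := integrableOn_dyadic_step (summable_norm_Jval hf hv (hlim v hv))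
  consistent _ hu _ _ _ hz := Jest_eq_of_mem_Vstar f hu hz

theorem unbiased_Jest : C.Unbiased f (C.Jest f) := fun v hv =>
  (integral_dyadic_step (summable_norm_Jval hf hv (hlim v hv))).trans
    (hasSum_Jval hf hv (hlim v hv)).tsum_eq

end Nonneg

end CoordScheme

/-- `f` has a nonnegative unbiased estimator iff for every `v ∈ V`,
`lim_{u→0⁺} f̲⁽ᵛ⁾(u) = f(v)`. -/
theorem stmt6 {r : ℕ} (C : CoordScheme r) (f : (Fin r → ℝ) → ℝ)
    (hf : ∀ v ∈ C.V, 0 ≤ f v) :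
    (∃ fhat : ℝ → (Fin r → ℝ) → ℝ,
        C.IsEstimator fhat ∧ C.Nonneg fhat ∧ C.Unbiased f fhat) ↔
    ∀ v ∈ C.V, Filter.Tendsto (fun u => C.lb f u v) (𝓝[>] (0:ℝ)) (𝓝 (f v)) := by
  constructor
  · rintro ⟨fhat, hest, hnn, hub⟩ v hv
    exact CoordScheme.tendsto_lb_of_unbiased f hf hest hnn hub hv
  · intro hlim
    exact ⟨C.Jest f, CoordScheme.isEstimator_Jest hf hlim, CoordScheme.nonneg_Jest hf,
      CoordScheme.unbiased_Jest hf hlim⟩
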